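/- Fix c > 0 and 𝛍 ∈ ℂ with Im 𝛍 = ϑ·2 where ϑ ∈ [0, π/2), and set r = coth(c/2). The Möbius transformation U = T_𝛍 ∘ J, where J = [[0, −coth(c/2)], [tanh(c/2), 0]] and T_𝛍 = [[cosh(𝛍/2), −sinh(𝛍/2)·coth(c/2)], [−sinh(𝛍/2)·tanh(c/2), cosh(𝛍/2)]], maps the hypercycle circle {z ∈ ℂ : |z + i·r·tan ϑ| = r·sec ϑ} onto itself. -/

import Mathlib

open Complex Real

noncomputable def cothR (x : ℝ) : ℝ := Real.cosh x / Real.sinh x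

noncomputable def cothC (z : ℂ) : ℂ := Complex.cosh z / Complex.sinh z

noncomputable def mobius (A : Matrix (Fin 2) (Fin 2) ℂ) (z : ℂ) : ℂ :=
  (A 0 0 * z + A 0 1) / (A 1 0 * z + A 1 1)

noncomputable def Jmat (c : ℝ) : Matrix (Fin 2) (Fin 2) ℂ :=
  !![0, -cothC (c / 2); Complex.tanh (c / 2), 0]

noncomputable def Tmat (c : ℝ) (m : ℂ) : Matrix (Fin 2) (Fin 2) ℂ :=
  !![Complex.cosh (m / 2), -Complex.sinh (m / 2) * cothC (c / 2);
     -Complex.sinh (m / 2) * Complex.tanh (c / 2), Complex.cosh (m / 2)]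

/-!
A generalized circle is the zero set `{z | (z̄, 1) H (z, 1)ᵀ = 0}` of a Hermitian form, and a
Möbius map with invertible matrix `M` maps it into itself as soon as `Mᴴ H M` is a multiple of `H`:
the form at `M (z, 1)ᵀ` then vanishes, which rules out a zero denominator when `H₀₀ ≠ 0`.
Applying the same to `M⁻¹` gives surjectivity.

The hypercycle is the zero set of `H = [[1, i r tan ϑ], [-i r tan ϑ, -r²]]`, and with
`A = cosh(𝛍/2)`, `B = sinh(𝛍/2)` one has `U = [[-B, -r A], [r⁻¹ A, B]]` and `Uᴴ H U = -H`.
Entrywise this reduces to `|A|² - |B|² = cosh(w - w̄) = cos 2ϑ` and `Ā B - A B̄ = sinh(w - w̄) = i sin 2ϑ`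
for `w = 𝛍/2`, combined with `cos 2ϑ + tan ϑ sin 2ϑ = 1` and `sin 2ϑ - tan ϑ cos 2ϑ = tan ϑ`.
-/

open Matrix ComplexConjugate

def hermitianCircle (H : Matrix (Fin 2) (Fin 2) ℂ) : Set ℂ :=
  {z | star ![z, 1] ⬝ᵥ H *ᵥ ![z, 1] = 0}

lemma mobius_eq_div (M : Matrix (Fin 2) (Fin 2) ℂ) (z : ℂ) :
    mobius M z = (M *ᵥ ![z, 1]) 0 / (M *ᵥ ![z, 1]) 1 := by
  simp [mobius, mulVec, dotProduct, Fin.sum_univ_two]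

lemma mobius_one (z : ℂ) : mobius 1 z = z := by
  simp [mobius]

lemma mobius_mul (M N : Matrix (Fin 2) (Fin 2) ℂ) {z : ℂ} (hz : (N *ᵥ ![z, 1]) 1 ≠ 0) :
    mobius (M * N) z = mobius M (mobius N z) := by
  simp only [mobius, mulVec, dotProduct, Fin.sum_univ_two, mul_apply] at hz ⊢
  simp only [cons_val_zero, cons_val_one, mul_one] at hz ⊢
  field_simp
  ring

lemma star_mulVec_dotProduct_mulVec (H M : Matrix (Fin 2) (Fin 2) ℂ) (v : Fin 2 → ℂ) :
    star (M *ᵥ v) ⬝ᵥ H *ᵥ (M *ᵥ v) = star v ⬝ᵥ (Mᴴ * H * M) *ᵥ v := by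
  rw [star_mulVec, dotProduct_mulVec, vecMul_vecMul, dotProduct_mulVec, vecMul_vecMul,
    dotProduct_mulVec]

lemma star_smul_dotProduct_mulVec (H : Matrix (Fin 2) (Fin 2) ℂ) (a : ℂ) (v : Fin 2 → ℂ) :
    star (a • v) ⬝ᵥ H *ᵥ (a • v) = star a * a * (star v ⬝ᵥ H *ᵥ v) := by
  rw [star_smul, mulVec_smul, dotProduct_smul, smul_dotProduct, smul_eq_mul, smul_eq_mul,
    mul_left_comm, mul_assoc]

section

variable {M H : Matrix (Fin 2) (Fin 2) ℂ} {μ : ℂ}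

lemma mulVec_one_ne_zero_of_mem_hermitianCircle (hMH : Mᴴ * H * M = μ • H) (hdet : M.det ≠ 0)
    (hH : H 0 0 ≠ 0) {z : ℂ} (hz : z ∈ hermitianCircle H) : (M *ᵥ ![z, 1]) 1 ≠ 0 := by
  intro hD
  have hMz : M *ᵥ ![z, 1] = (M *ᵥ ![z, 1]) 0 • ![1, 0] := by
    ext i; fin_cases i
    · simp
    · simpa using hD
  have hform := star_mulVec_dotProduct_mulVec H M ![z, 1]
  rw [hMH, smul_mulVec, dotProduct_smul, hz, smul_zero, hMz, star_smul_dotProduct_mulVec]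
    at hform
  have he₀ : star ![1, 0] ⬝ᵥ H *ᵥ ![(1 : ℂ), 0] = H 0 0 := by simp [vecHead, vecTail]
  rw [he₀, mul_eq_zero, mul_eq_zero, star_eq_zero, or_self] at hform
  have hMz₀ : (M *ᵥ ![z, 1]) 0 = 0 := hform.resolve_right hH
  refine hdet (exists_mulVec_eq_zero_iff.mp ⟨![z, 1], by simp, ?_⟩)
  rw [hMz, hMz₀, zero_smul]

lemma mobius_mem_hermitianCircle (hMH : Mᴴ * H * M = μ • H) (hdet : M.det ≠ 0)
    (hH : H 0 0 ≠ 0) {z : ℂ} (hz : z ∈ hermitianCircle H) :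
    mobius M z ∈ hermitianCircle H := by
  have hD := mulVec_one_ne_zero_of_mem_hermitianCircle hMH hdet hH hz
  have hMz : M *ᵥ ![z, 1] = (M *ᵥ ![z, 1]) 1 • ![mobius M z, 1] := by
    ext i; fin_cases i
    · show (M *ᵥ ![z, 1]) 0 = (M *ᵥ ![z, 1]) 1 * mobius M z
      rw [mobius_eq_div, mul_div_cancel₀ _ hD]
    · simp
  have hform := star_mulVec_dotProduct_mulVec H M ![z, 1]
  rw [hMH, smul_mulVec, dotProduct_smul, hz, smul_zero, hMz, star_smul_dotProduct_mulVec]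
    at hform
  exact (mul_eq_zero.mp hform).resolve_left (mul_ne_zero (star_ne_zero.mpr hD) hD)

lemma mobius_image_hermitianCircle (hMH : Mᴴ * H * M = μ • H) (hμ : μ ≠ 0)
    (hdet : M.det ≠ 0) (hH : H 0 0 ≠ 0) : mobius M '' hermitianCircle H = hermitianCircle H := by
  have hunit : IsUnit M.det := hdet.isUnit
  have hMinv : (M⁻¹)ᴴ * H * M⁻¹ = μ⁻¹ • H := by
    have hcancel : (M⁻¹)ᴴ * Mᴴ = 1 := by
      rw [← conjTranspose_mul, mul_nonsing_inv M hunit, conjTranspose_one]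
    calc (M⁻¹)ᴴ * H * M⁻¹ = μ⁻¹ • ((M⁻¹)ᴴ * (Mᴴ * H * M) * M⁻¹) := by
          rw [hMH, Matrix.mul_smul, Matrix.smul_mul, smul_smul, inv_mul_cancel₀ hμ, one_smul]
      _ = μ⁻¹ • H := by
          rw [← Matrix.mul_assoc, ← Matrix.mul_assoc, hcancel, Matrix.one_mul, Matrix.mul_assoc,
            mul_nonsing_inv M hunit, Matrix.mul_one]
  have hdetinv : M⁻¹.det ≠ 0 := by
    rw [det_nonsing_inv, Ring.inverse_eq_inv']
    exact inv_ne_zero hdet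
  refine Set.Subset.antisymm ?_ fun z hz => ⟨mobius M⁻¹ z, ?_, ?_⟩
  · rintro _ ⟨z, hz, rfl⟩
    exact mobius_mem_hermitianCircle hMH hdet hH hz
  · exact mobius_mem_hermitianCircle hMinv hdetinv hH hz
  · rw [← mobius_mul _ _ (mulVec_one_ne_zero_of_mem_hermitianCircle hMinv hdetinv hH hz),
      mul_nonsing_inv M hunit, mobius_one]

end

lemma cos_two_mul_add_tan_mul_sin_two_mul {θ : ℝ} (h : Real.cos θ ≠ 0) :
    Real.cos (2 * θ) + Real.tan θ * Real.sin (2 * θ) = 1 := by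
  rw [Real.tan_eq_sin_div_cos, Real.cos_two_mul, Real.sin_two_mul]
  field_simp
  linear_combination 2 * Real.sin_sq_add_cos_sq θ

lemma sin_two_mul_sub_tan_mul_cos_two_mul {θ : ℝ} (h : Real.cos θ ≠ 0) :
    Real.sin (2 * θ) - Real.tan θ * Real.cos (2 * θ) = Real.tan θ := by
  rw [Real.tan_eq_sin_div_cos, Real.cos_two_mul, Real.sin_two_mul]
  field_simp
  ring

lemma cosh_mul_conj_sub_sinh_mul_conj (w : ℂ) :
    cosh w * conj (cosh w) - sinh w * conj (sinh w) = Real.cos (2 * w.im) := by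
  rw [← cosh_conj, ← sinh_conj, ← Complex.cosh_sub, sub_conj, cosh_mul_I, ofReal_cos]

lemma conj_cosh_mul_sinh_sub_cosh_mul_conj_sinh (w : ℂ) :
    conj (cosh w) * sinh w - cosh w * conj (sinh w) = Real.sin (2 * w.im) * I := by
  rw [← cosh_conj, ← sinh_conj, mul_comm (Complex.cosh _), ← Complex.sinh_sub, sub_conj,
    sinh_mul_I, ofReal_sin]

lemma cosh_sinh_hypercycle_identity₁ (w : ℂ) (hcos : Real.cos w.im ≠ 0) :
    cosh w * conj (cosh w) - sinh w * conj (sinh w)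
      - I * Real.tan w.im * (conj (cosh w) * sinh w - cosh w * conj (sinh w)) = 1 := by
  have key : (Real.cos (2 * w.im) : ℂ) + Real.tan w.im * Real.sin (2 * w.im) = 1 := by
    exact_mod_cast cos_two_mul_add_tan_mul_sin_two_mul hcos
  rw [cosh_mul_conj_sub_sinh_mul_conj, conj_cosh_mul_sinh_sub_cosh_mul_conj_sinh]
  linear_combination key - Real.tan w.im * Real.sin (2 * w.im) * I_sq

lemma cosh_sinh_hypercycle_identity₂ (w : ℂ) (hcos : Real.cos w.im ≠ 0) :
    conj (cosh w) * sinh w - cosh w * conj (sinh w)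
      - I * Real.tan w.im * (cosh w * conj (cosh w) - sinh w * conj (sinh w))
      = I * Real.tan w.im := by
  have key : (Real.sin (2 * w.im) : ℂ) - Real.tan w.im * Real.cos (2 * w.im) = Real.tan w.im := by
    exact_mod_cast sin_two_mul_sub_tan_mul_cos_two_mul hcos
  rw [cosh_mul_conj_sub_sinh_mul_conj, conj_cosh_mul_sinh_sub_cosh_mul_conj_sinh]
  linear_combination I * key

noncomputable def hypercycleForm (r τ : ℝ) : Matrix (Fin 2) (Fin 2) ℂ :=
  !![1, I * (r * τ); -(I * (r * τ)), -(r : ℂ) ^ 2]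

lemma sphere_eq_hermitianCircle (w : ℂ) {ρ : ℝ} (hρ : 0 ≤ ρ) :
    {z : ℂ | ‖z + w‖ = ρ} =
      hermitianCircle !![1, w; conj w, ((‖w‖ ^ 2 - ρ ^ 2 : ℝ) : ℂ)] := by
  ext z
  have hform :
      star ![z, 1] ⬝ᵥ !![1, w; conj w, ((‖w‖ ^ 2 - ρ ^ 2 : ℝ) : ℂ)] *ᵥ ![z, 1] =
        ((‖z + w‖ ^ 2 - ρ ^ 2 : ℝ) : ℂ) := by
    simp only [mulVec, vec2_dotProduct, Pi.star_apply, RCLike.star_def, of_apply, cons_val',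
      cons_val_zero, cons_val_one, cons_val_fin_one, map_one, ofReal_sub, ofReal_pow]
    rw [← mul_conj', ← mul_conj', map_add]
    ring
  simp only [hermitianCircle, Set.mem_ofPred_eq, hform, ofReal_eq_zero, sub_eq_zero]
  exact (pow_left_inj₀ (norm_nonneg _) hρ two_ne_zero).symm

lemma hypercycle_eq_hermitianCircle {r ϑ : ℝ} (hr : 0 ≤ r) (hcos : 0 < Real.cos ϑ) :
    {z : ℂ | ‖z + I * (r * Real.tan ϑ)‖ = r / Real.cos ϑ} =
      hermitianCircle (hypercycleForm r (Real.tan ϑ)) := by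
  rw [sphere_eq_hermitianCircle _ (div_nonneg hr hcos.le)]
  have hnorm : ‖I * (r * Real.tan ϑ)‖ ^ 2 - (r / Real.cos ϑ) ^ 2 = -r ^ 2 := by
    rw [norm_mul, norm_I, one_mul, ← ofReal_mul, norm_real, Real.norm_eq_abs, sq_abs,
      Real.tan_eq_sin_div_cos]
    field_simp
    linear_combination r ^ 2 * Real.sin_sq_add_cos_sq ϑ
  have hconj : conj (I * (r * Real.tan ϑ)) = -(I * (r * Real.tan ϑ)) := by
    simp only [map_mul, conj_I, conj_ofReal, neg_mul]
  rw [hconj, hnorm, ofReal_neg, ofReal_pow]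
  rfl

lemma conjTranspose_mul_hypercycleForm_mul (A B : ℂ) (r t τ : ℝ) (hrt : (r : ℂ) * t = 1)
    (h1 : A * conj A - B * conj B - I * τ * (conj A * B - A * conj B) = 1)
    (h2 : conj A * B - A * conj B - I * τ * (A * conj A - B * conj B) = I * τ) :
    (!![-B, -(r * A); t * A, B])ᴴ * hypercycleForm r τ * !![-B, -(r * A); t * A, B]
      = (-1 : ℂ) • hypercycleForm r τ := by
  ext i j
  fin_cases i <;> fin_cases j <;>
    simp only [hypercycleForm, Matrix.mul_apply, conjTranspose_apply, Matrix.smul_apply, of_apply,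
      cons_val', cons_val_zero, cons_val_one, cons_val_fin_one, Fin.sum_univ_two, Fin.zero_eta,
      Fin.mk_one, RCLike.star_def, map_neg, map_mul, conj_ofReal, smul_eq_mul]
  · linear_combination
      (-1) * h1 + (-(1 + r * t) * A * conj A + I * τ * (conj A * B - A * conj B)) * hrt
  · linear_combination (-r) * h2 + (I * r * τ * A * conj A - r * conj A * B) * hrt
  · linear_combination r * h2 + (-I * r * τ * A * conj A - r * A * conj B) * hrt
  · linear_combination r ^ 2 * h1

lemma cothC_ofReal (x : ℝ) : cothC x = cothR x := by
  simp [cothC, cothR]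

lemma cothR_mul_tanh {x : ℝ} (hx : x ≠ 0) : cothR x * Real.tanh x = 1 := by
  rw [cothR, Real.tanh_eq_sinh_div_cosh]
  have := Real.sinh_ne_zero.mpr hx
  have := (Real.cosh_pos x).ne'
  field_simp

lemma Tmat_mul_Jmat (c : ℝ) (m : ℂ) (hc : c ≠ 0) :
    Tmat c m * Jmat c = !![-sinh (m / 2), -(cothR (c / 2) * cosh (m / 2));
      Real.tanh (c / 2) * cosh (m / 2), sinh (m / 2)] := by
  have hcoth : cothC (c / 2) = cothR (c / 2) := by exact_mod_cast cothC_ofReal (c / 2)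
  have htanh : Complex.tanh (c / 2) = Real.tanh (c / 2) := by push_cast; rfl
  have hrt : (cothR (c / 2) : ℂ) * Complex.tanh (c / 2) = 1 := by
    rw [htanh]
    exact_mod_cast cothR_mul_tanh (div_ne_zero hc two_ne_zero)
  rw [Tmat, Jmat, mul_fin_two, hcoth, ← htanh]
  ext i j
  fin_cases i <;> fin_cases j <;>
    simp only [of_apply, cons_val', cons_val_zero, cons_val_one, cons_val_fin_one, Fin.zero_eta,
      Fin.mk_one]
  · linear_combination -sinh (m / 2) * hrt
  · ring
  · ring
  · linear_combination sinh (m / 2) * hrt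

theorem stmt8 (c : ℝ) (hc : 0 < c) (ϑ : ℝ) (hϑ : ϑ ∈ Set.Ico 0 (Real.pi / 2))
    (m : ℂ) (hm : m.im = 2 * ϑ) :
    (fun z => mobius (Tmat c m * Jmat c) z) ''
        {z : ℂ | ‖z + Complex.I * (cothR (c / 2) * Real.tan ϑ)‖ =
          cothR (c / 2) / Real.cos ϑ} =
      {z : ℂ | ‖z + Complex.I * (cothR (c / 2) * Real.tan ϑ)‖ =
        cothR (c / 2) / Real.cos ϑ} := by
  obtain ⟨hϑ0, hϑ1⟩ := hϑ
  have hcos : 0 < Real.cos ϑ := Real.cos_pos_of_mem_Ioo ⟨by linarith [Real.pi_pos], hϑ1⟩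
  have hr : 0 ≤ cothR (c / 2) :=
    div_nonneg (Real.cosh_pos _).le (Real.sinh_pos_iff.mpr (by positivity)).le
  have hrt : (cothR (c / 2) : ℂ) * Real.tanh (c / 2) = 1 := by
    exact_mod_cast cothR_mul_tanh (by positivity)
  have him : (m / 2).im = ϑ := by simp [hm]
  rw [hypercycle_eq_hermitianCircle hr hcos, Tmat_mul_Jmat c m hc.ne']
  refine mobius_image_hermitianCircle (μ := -1) ?_ (by norm_num) ?_ (by simp [hypercycleForm])
  · rw [← him] at hcos ⊢
    exact conjTranspose_mul_hypercycleForm_mul _ _ _ _ _ hrt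
      (cosh_sinh_hypercycle_identity₁ _ hcos.ne') (cosh_sinh_hypercycle_identity₂ _ hcos.ne')
  · rw [det_fin_two_of]
    refine ne_of_eq_of_ne ?_ one_ne_zero
    linear_combination (cosh (m / 2)) ^ 2 * hrt + Complex.cosh_sq_sub_sinh_sq (m / 2)
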